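/- Under the setting of the discrete error estimate (grid t_i = i·h with h > 0; L, V, μ > 0; Δ = ⌈L/(V·h)⌉ ≤ N; q₀ ≥ 0; (Q_i)_{i=0}^N nondecreasing and nonnegative; Q̂₀ = 0, Q̂_i = q₀ + Q_i; Q̂ the left-continuous piecewise-linear shifted inflow vanishing on (−∞,0]; U_i = min_{0 ≤ j ≤ i−Δ}(Q̂_j − μ t_j) + (t_i − L/V)μ; U(t, L) = inf_{τ ≤ t − L/V}(Q̂(τ) − μτ) + (t − L/V)μ), the error satisfies the grid-independent bound 0 ≤ U_i − U(t_i, L) ≤ h·μ for all Δ ≤ i ≤ N; consequently the discrete Lax formula converges uniformly to the continuous-time exit flow as h → 0. -/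
import Mathlib

set_option maxHeartbeats 1000000

/-- Grid-independent error bound for the discrete Lax formula: `0 ≤ U_i - U(t_i, L) ≤ h μ`,
so the discrete Lax formula converges uniformly to the continuous-time exit flow as `h → 0`. -/
theorem discrete_lax_uniform_error_bound (h : ℝ) (hh : 0 < h) (N : ℕ) (L V μ : ℝ)
    (hL : 0 < L) (hV : 0 < V) (hμ : 0 < μ) (hΔN : ⌈L / (V * h)⌉₊ ≤ N)
    (q0 : ℝ) (hq0 : 0 ≤ q0) (Q : ℕ → ℝ)
    (hQmono : ∀ i j : ℕ, i ≤ j → j ≤ N → Q i ≤ Q j) (hQnonneg : ∀ i ≤ N, 0 ≤ Q i)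
    (Qc : ℝ → ℝ) (hQc0 : ∀ τ : ℝ, τ ≤ 0 → Qc τ = 0)
    (hQcInterp : ∀ j : ℕ, j < N → ∀ τ : ℝ, (j : ℝ) * h < τ → τ ≤ ((j : ℝ) + 1) * h →
      Qc τ = q0 + Q j + (Q (j + 1) - Q j) * (τ - (j : ℝ) * h) / h) :
    let Δ : ℕ := ⌈L / (V * h)⌉₊
    let Qhat : ℕ → ℝ := fun i => if i = 0 then 0 else q0 + Q i
    let U : ℕ → ℝ := fun i =>
      (Finset.range (i - Δ + 1)).inf' (Finset.nonempty_range_iff.mpr (by omega))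
          (fun j => Qhat j - μ * (j * h)) +
        ((i : ℝ) * h - L / V) * μ
    let Uc : ℝ → ℝ := fun t =>
      sInf ((fun τ => Qc τ - μ * τ) '' Set.Iic (t - L / V)) + (t - L / V) * μ
    ∀ i : ℕ, Δ ≤ i → i ≤ N →
      0 ≤ U i - Uc ((i : ℝ) * h) ∧ U i - Uc ((i : ℝ) * h) ≤ h * μ := by
  intro Δ Qhat U Uc i hΔi hiN
  have hVh : 0 < V * h := mul_pos hV hh
  have hLVh : 0 < L / (V * h) := div_pos hL hVh
  have hΔ1 : 1 ≤ Δ := Nat.one_le_ceil_iff.mpr hLVh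
  have hLVeq : L / (V * h) * h = L / V := by
    field_simp
  have hΔlow : L / V ≤ (Δ : ℝ) * h := by
    have h1 : L / (V * h) ≤ (Δ : ℝ) := Nat.le_ceil _
    calc L / V = L / (V * h) * h := hLVeq.symm
      _ ≤ (Δ : ℝ) * h := mul_le_mul_of_nonneg_right h1 hh.le
  have hΔhigh : ((Δ : ℝ) - 1) * h < L / V := by
    have h1 : (Δ : ℝ) < L / (V * h) + 1 := Nat.ceil_lt_add_one hLVh.le
    calc ((Δ : ℝ) - 1) * h < L / (V * h) * h :=
          mul_lt_mul_of_pos_right (by linarith) hh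
      _ = L / V := hLVeq
  -- Qhat facts
  have hQhat0 : Qhat 0 = 0 := rfl
  have hQhatSucc : ∀ k : ℕ, Qhat (k + 1) = q0 + Q (k + 1) := fun k => rfl
  have hQhatle : ∀ k : ℕ, k ≤ N → Qhat k ≤ q0 + Q k := by
    intro k hk
    cases k with
    | zero => rw [hQhat0]; have := hQnonneg 0 (Nat.zero_le N); linarith
    | succ m => rw [hQhatSucc]
  -- Qc at grid points
  have hQcgrid : ∀ j : ℕ, j ≤ N → Qc ((j : ℝ) * h) = Qhat j := by
    intro j hj
    cases j with
    | zero =>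
      rw [hQhat0]
      apply hQc0
      simp
    | succ k =>
      rw [hQhatSucc]
      have hk : k < N := by omega
      have h1 : (k : ℝ) * h < ((k : ℝ) + 1) * h := by nlinarith
      have h2 := hQcInterp k hk (((k : ℕ) + 1 : ℕ) * h) (by push_cast; linarith)
        (by push_cast; linarith)
      rw [h2]
      push_cast
      field_simp
      ring
  -- locating τ in a grid cell
  have hfind : ∀ τ : ℝ, 0 < τ → τ ≤ (N : ℝ) * h →
      ∃ k : ℕ, k < N ∧ (k : ℝ) * h < τ ∧ τ ≤ ((k : ℝ) + 1) * h := by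
    intro τ hτ hτN
    set m := ⌈τ / h⌉₊ with hm
    have hm1 : 1 ≤ m := Nat.one_le_ceil_iff.mpr (div_pos hτ hh)
    have hmle : τ / h ≤ (m : ℝ) := Nat.le_ceil _
    have hmN : m ≤ N := Nat.ceil_le.mpr ((div_le_iff₀ hh).mpr (by linarith))
    have hlt : ((m - 1 : ℕ) : ℝ) < τ / h := Nat.lt_ceil.mp (by omega)
    refine ⟨m - 1, by omega, ?_, ?_⟩
    · exact (lt_div_iff₀ hh).mp hlt
    · have hcast : ((m - 1 : ℕ) : ℝ) = (m : ℝ) - 1 := by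
        push_cast [Nat.cast_sub hm1]; ring
      rw [hcast]
      have := (div_le_iff₀ hh).mp hmle
      linarith
  -- Qc nonneg on relevant range
  have hQcnn : ∀ τ : ℝ, τ ≤ (N : ℝ) * h → 0 ≤ Qc τ := by
    intro τ hτ
    rcases le_or_gt τ 0 with h0 | h0
    · rw [hQc0 τ h0]
    · obtain ⟨k, hkN, hk1, hk2⟩ := hfind τ h0 hτ
      rw [hQcInterp k hkN τ hk1 hk2]
      have hq1 := hQnonneg k (by omega)
      have hq2 := hQmono k (k + 1) (by omega) hkN
      have ht : 0 ≤ (Q (k + 1) - Q k) * (τ - (k : ℝ) * h) / h :=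
        div_nonneg (mul_nonneg (by linarith) (by linarith)) hh.le
      linarith
  set a : ℝ := (i : ℝ) * h - L / V with ha
  have haN : a ≤ (N : ℝ) * h := by
    have : (i : ℝ) * h ≤ (N : ℝ) * h :=
      mul_le_mul_of_nonneg_right (by exact_mod_cast hiN) hh.le
    have hLV : 0 < L / V := div_pos hL hV
    simp only [ha]; linarith
  set S : Set ℝ := (fun τ => Qc τ - μ * τ) '' Set.Iic a with hS
  have hSne : S.Nonempty := ⟨Qc a - μ * a, a, Set.mem_Iic.mpr le_rfl, rfl⟩
  have hbdd : BddBelow S := by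
    refine ⟨-(μ * a), ?_⟩
    rintro x ⟨τ, hτ, rfl⟩
    have hτa : τ ≤ a := hτ
    have h1 : 0 ≤ Qc τ := hQcnn τ (le_trans hτa haN)
    have h2 : μ * τ ≤ μ * a := mul_le_mul_of_nonneg_left hτa hμ.le
    simp only [lowerBounds]
    linarith
  have hne : (Finset.range (i - Δ + 1)).Nonempty := Finset.nonempty_range_iff.mpr (by omega)
  set F : ℕ → ℝ := fun j => Qhat j - μ * (j * h) with hF
  have hUeq : U i = (Finset.range (i - Δ + 1)).inf' hne F + a * μ := rfl
  have hUceq : Uc ((i : ℝ) * h) = sInf S + a * μ := rfl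
  -- lower bound
  have key1 : sInf S ≤ (Finset.range (i - Δ + 1)).inf' hne F := by
    apply Finset.le_inf'
    intro j hj
    rw [Finset.mem_range] at hj
    have hjN : j ≤ N := by omega
    have hji : ((j : ℝ) + (Δ : ℝ)) * h ≤ (i : ℝ) * h := by
      have hc : ((j + Δ : ℕ) : ℝ) ≤ (i : ℝ) := by exact_mod_cast (by omega : j + Δ ≤ i)
      push_cast at hc
      exact mul_le_mul_of_nonneg_right hc hh.le
    have hja : (j : ℝ) * h ≤ a := by simp only [ha]; nlinarith
    refine csInf_le hbdd ⟨(j : ℝ) * h, Set.mem_Iic.mpr hja, ?_⟩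
    show Qc ((j : ℝ) * h) - μ * ((j : ℝ) * h) = F j
    simp only [hF]
    rw [hQcgrid j hjN]
  -- upper bound
  have key2 : (Finset.range (i - Δ + 1)).inf' hne F - h * μ ≤ sInf S := by
    apply le_csInf hSne
    rintro b ⟨τ, hτ, rfl⟩
    show (Finset.range (i - Δ + 1)).inf' hne F - h * μ ≤ Qc τ - μ * τ
    have hτa : τ ≤ a := hτ
    rcases le_or_gt τ 0 with h0 | h0
    · have h0mem : (0 : ℕ) ∈ Finset.range (i - Δ + 1) := Finset.mem_range.mpr (by omega)
      have hle := Finset.inf'_le F h0mem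
      have hF0 : F 0 = 0 := by simp [hF, hQhat0]
      rw [hF0] at hle
      rw [hQc0 τ h0]
      nlinarith
    · obtain ⟨k, hkN, hk1, hk2⟩ := hfind τ h0 (le_trans hτa haN)
      have hkmem : k ∈ Finset.range (i - Δ + 1) := by
        rw [Finset.mem_range]
        by_contra hc
        push_neg at hc
        have hki : (i : ℝ) - (Δ : ℝ) + 1 ≤ (k : ℝ) := by
          have : (i - Δ + 1 : ℕ) ≤ k := hc
          have h2 : ((i - Δ + 1 : ℕ) : ℝ) ≤ (k : ℝ) := by exact_mod_cast this
          have h3 : ((i - Δ + 1 : ℕ) : ℝ) = (i : ℝ) - (Δ : ℝ) + 1 := by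
            push_cast [Nat.cast_sub hΔi]; ring
          linarith
        -- then k*h ≥ (i - Δ + 1)*h > i*h - L/V ≥ τ > k*h, contradiction
        have : ((i : ℝ) - (Δ : ℝ) + 1) * h ≤ (k : ℝ) * h :=
          mul_le_mul_of_nonneg_right hki hh.le
        simp only [ha] at hτa
        nlinarith
      have hle := Finset.inf'_le F hkmem
      have hQcτ := hQcInterp k hkN τ hk1 hk2
      have hq2 := hQmono k (k + 1) (by omega) hkN
      have ht : 0 ≤ (Q (k + 1) - Q k) * (τ - (k : ℝ) * h) / h :=
        div_nonneg (mul_nonneg (by linarith) (by linarith)) hh.le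
      have hFk : F k ≤ Qc τ - μ * τ + h * μ := by
        have h1 : Qhat k ≤ q0 + Q k := hQhatle k (by omega)
        have h2 : q0 + Q k ≤ Qc τ := by rw [hQcτ]; linarith
        have h3 : τ - (k : ℝ) * h ≤ h := by nlinarith
        simp only [hF]
        have h4 : μ * ((k : ℝ) * h) ≥ μ * τ - μ * h := by nlinarith
        linarith
      linarith
  rw [hUeq, hUceq]
  constructor <;> linarith
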